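/- arXiv:2210.14543 — 5 statements merged into one kernel-verified Lean document; each statement's English description precedes it below -/
import Mathlib

section
/- Craig's representation of the Q-function: for all x ≥ 0, Q(x) = (1/π)·∫_0^{π/2} exp(−x²/(2 sin²θ)) dθ. -/
/-
Both sides equal `π⁻¹` times the Gaussian mass `∬ e^{-(u²+v²)/2}` of the quarter-plane
`{u > 0, v > x}`: for the left side integrate in Cartesian coordinates, using
`∫_0^∞ e^{-u²/2} du = √(2π)/2`; for the right side pass to polar coordinates, where for `x ≥ 0`
only the angles `0 < θ < π/2` contribute, the ray of angle `θ` enters the quarter-plane at radius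
`x / sin θ`, and `∫_a^∞ r e^{-r²/2} dr = e^{-a²/2}`.
-/

open Real Set intervalIntegral

/-- The Gaussian tail function `Q(x) = (1/√(2π)) ∫_x^∞ e^{-t²/2} dt`. -/
noncomputable def gaussQ (x : ℝ) : ℝ :=
  (Real.sqrt (2 * Real.pi))⁻¹ * ∫ t in Set.Ioi x, Real.exp (-t ^ 2 / 2)

open MeasureTheory Filter

theorem integral_eq_integral_integral_polar {E : Type*} [NormedAddCommGroup E] [NormedSpace ℝ E]
    {f : ℝ × ℝ → E} (hf : Integrable f) :
    ∫ p, f p = ∫ θ in Ioo (-π) π, ∫ r in Ioi 0, r • f (r * cos θ, r * sin θ) := by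
  have hmeas : MeasurableSet polarCoord.target := polarCoord.open_target.measurableSet
  have hint : IntegrableOn (fun p : ℝ × ℝ => p.1 • f (polarCoord.symm p)) polarCoord.target := by
    have h := (integrableOn_image_iff_integrableOn_abs_det_fderiv_smul volume hmeas
      (fun p _ => (hasFDerivAt_polarCoord_symm p).hasFDerivWithinAt) polarCoord.symm.injOn f).1
      (polarCoord.symm_image_target_eq_source ▸ hf.integrableOn)
    simp_rw [det_fderivPolarCoordSymm] at h
    exact h.congr_fun (fun p hp => by dsimp only; rw [abs_of_pos hp.1]) hmeas
  rw [← integral_comp_polarCoord_symm, polarCoord_target, Measure.volume_eq_prod,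
    ← setIntegral_prod_swap, setIntegral_prod]
  · rfl
  · exact hint.swap

theorem integral_Ioi_mul_exp_neg_sq_div_two (a : ℝ) :
    ∫ r in Ioi a, r * exp (-r ^ 2 / 2) = exp (-a ^ 2 / 2) := by
  have hderiv (r : ℝ) : HasDerivAt (fun r => -exp (-r ^ 2 / 2)) (r * exp (-r ^ 2 / 2)) r :=
    ((hasDerivAt_pow 2 r).neg.div_const 2).exp.neg.congr_deriv
      (by simp only [Pi.neg_apply]; ring)
  have hlim : Tendsto (fun r : ℝ => -exp (-r ^ 2 / 2)) atTop (nhds 0) := by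
    have h : Tendsto (fun r : ℝ => -r ^ 2 / 2) atTop atBot :=
      (tendsto_neg_atBot_iff.mpr (tendsto_pow_atTop two_ne_zero)).atBot_div_const two_pos
    simpa using (tendsto_exp_atBot.comp h).neg
  have hint : IntegrableOn (fun r => r * exp (-r ^ 2 / 2)) (Ioi a) :=
    (integrable_mul_exp_neg_mul_sq (b := 1 / 2) one_half_pos).integrableOn.congr_fun
      (fun r _ => by dsimp only; ring_nf) measurableSet_Ioi
  simpa using integral_Ioi_of_hasDerivAt_of_tendsto' (fun r _ => hderiv r) hint hlim

theorem integrable_exp_neg_sq_div_two : Integrable fun t : ℝ => exp (-t ^ 2 / 2) :=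
  (integrable_exp_neg_mul_sq one_half_pos).congr (.of_forall fun t => by ring_nf)

theorem integral_Ioi_zero_exp_neg_sq_div_two :
    ∫ t in Ioi (0 : ℝ), exp (-t ^ 2 / 2) = √(2 * π) / 2 := by
  convert integral_gaussian_Ioi (1 / 2) using 4 with t
  · ring
  · ring

theorem mem_Ioo_zero_pi_div_two_of_cos_pos_of_sin_pos {θ : ℝ} (hθ : θ ∈ Ioo (-π) π)
    (hcos : 0 < cos θ) (hsin : 0 < sin θ) : θ ∈ Ioo 0 (π / 2) := by
  have hpos : 0 < θ := by
    by_contra! h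
    exact (sin_nonpos_of_nonpos_of_neg_pi_le h hθ.1.le).not_gt hsin
  refine ⟨hpos, ?_⟩
  by_contra! h
  exact (cos_nonpos_of_pi_div_two_le_of_le h (by linarith [hθ.2])).not_gt hcos

theorem exp_neg_sq_div_two_polar (r θ : ℝ) :
    exp (-(r * cos θ) ^ 2 / 2) * exp (-(r * sin θ) ^ 2 / 2) = exp (-r ^ 2 / 2) := by
  rw [← exp_add]
  congr 1
  linear_combination (-r ^ 2 / 2) * sin_sq_add_cos_sq θ

theorem pi_mul_gaussQ (x : ℝ) :
    π * gaussQ x = ∫ p in Ioi 0 ×ˢ Ioi x, exp (-p.1 ^ 2 / 2) * exp (-p.2 ^ 2 / 2) := by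
  rw [Measure.volume_eq_prod, setIntegral_prod_mul (fun u => exp (-u ^ 2 / 2))
    (fun v => exp (-v ^ 2 / 2)), integral_Ioi_zero_exp_neg_sq_div_two, gaussQ]
  have hpi : π * (√(2 * π))⁻¹ = √(2 * π) / 2 := by
    field_simp
    rw [sq_sqrt (by positivity)]
  rw [← mul_assoc, hpi]

theorem integral_Ioi_polar_quadrant_gaussian {x θ : ℝ} (hx : 0 ≤ x) (hθ : θ ∈ Ioo (-π) π) :
    ∫ r in Ioi 0, r * (Ioi 0 ×ˢ Ioi x).indicator
        (fun p : ℝ × ℝ => exp (-p.1 ^ 2 / 2) * exp (-p.2 ^ 2 / 2)) (r * cos θ, r * sin θ) =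
      (Ioo 0 (π / 2)).indicator (fun θ => exp (-x ^ 2 / (2 * sin θ ^ 2))) θ := by
  by_cases hθ' : θ ∈ Ioo 0 (π / 2)
  · have hcos : 0 < cos θ := cos_pos_of_mem_Ioo ⟨by linarith [hθ'.1, pi_pos], hθ'.2⟩
    have hsin : 0 < sin θ := sin_pos_of_pos_of_lt_pi hθ'.1 (by linarith [hθ'.2, pi_pos])
    have hmem {r : ℝ} (hr : 0 < r) :
        (r * cos θ, r * sin θ) ∈ Ioi 0 ×ˢ Ioi x ↔ r ∈ Ioi (x / sin θ) := by
      simp [div_lt_iff₀ hsin, mul_pos hr hcos]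
    calc _ = ∫ r in Ioi 0, (Ioi (x / sin θ)).indicator (fun r => r * exp (-r ^ 2 / 2)) r := by
          refine setIntegral_congr_fun measurableSet_Ioi fun r hr => ?_
          simp only [indicator_apply, hmem hr, mul_ite, mul_zero, exp_neg_sq_div_two_polar]
      _ = ∫ r in Ioi (x / sin θ), r * exp (-r ^ 2 / 2) := by
          rw [setIntegral_indicator measurableSet_Ioi,
            inter_eq_right.2 (Ioi_subset_Ioi (div_nonneg hx hsin.le))]
      _ = _ := by
          rw [integral_Ioi_mul_exp_neg_sq_div_two, indicator_of_mem hθ']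
          field_simp
  · rw [indicator_of_notMem hθ']
    refine setIntegral_eq_zero_of_forall_eq_zero fun r hr => ?_
    rw [indicator_of_notMem, mul_zero]
    rintro ⟨hu, hv⟩
    have hcos : 0 < cos θ := pos_of_mul_pos_right hu (le_of_lt hr)
    have hsin : 0 < sin θ := pos_of_mul_pos_right (hx.trans_lt hv) (le_of_lt hr)
    exact hθ' (mem_Ioo_zero_pi_div_two_of_cos_pos_of_sin_pos hθ hcos hsin)

/-- Craig's representation of the Q-function. -/
theorem gaussQ_craig (x : ℝ) (hx : 0 ≤ x) :
    gaussQ x = (1 / Real.pi) *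
      ∫ θ in (0 : ℝ)..(Real.pi / 2), Real.exp (-x ^ 2 / (2 * Real.sin θ ^ 2)) := by
  have hint : Integrable ((Ioi 0 ×ˢ Ioi x).indicator
      fun p : ℝ × ℝ => exp (-p.1 ^ 2 / 2) * exp (-p.2 ^ 2 / 2)) :=
    (integrable_exp_neg_sq_div_two.mul_prod integrable_exp_neg_sq_div_two).indicator
      (measurableSet_Ioi.prod measurableSet_Ioi)
  have hcraig : π * gaussQ x = ∫ θ in (0 : ℝ)..(π / 2), exp (-x ^ 2 / (2 * sin θ ^ 2)) := by
    rw [pi_mul_gaussQ,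
      ← MeasureTheory.integral_indicator (measurableSet_Ioi.prod measurableSet_Ioi),
      integral_eq_integral_integral_polar hint]
    simp_rw [smul_eq_mul]
    rw [setIntegral_congr_fun measurableSet_Ioo fun θ hθ =>
        integral_Ioi_polar_quadrant_gaussian hx hθ,
      setIntegral_indicator measurableSet_Ioo,
      inter_eq_right.2 (Ioo_subset_Ioo (by linarith [pi_pos]) (by linarith [pi_pos])),
      integral_of_le (by positivity), integral_Ioc_eq_integral_Ioo]
  rw [← hcraig]
  field_simp
end

section
/- Let M ≥ 2 be an integer and θ uniform on [−π/M, π/M], and v = cos θ − |sin θ|·cot(π/M). Then for x ∈ [0,1], P(v ≤ x) = (M/π)·arcsin(x·sin(π/M)). -/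
open MeasureTheory ProbabilityTheory Real Set

theorem v_cdf {Ω : Type*} [MeasureSpace Ω]
    [IsProbabilityMeasure (ℙ : Measure Ω)]
    (M : ℕ) (hM : 2 ≤ M) (θ : Ω → ℝ) (hmθ : Measurable θ)
    (hθ : Measure.map θ ℙ =
      (ENNReal.ofReal (2 * (Real.pi / M)))⁻¹ •
        (volume.restrict (Set.Icc (-(Real.pi / M)) (Real.pi / M))))
    (x : ℝ) (hx : x ∈ Set.Icc (0 : ℝ) 1) :
    (ℙ {ω | Real.cos (θ ω) -
        |Real.sin (θ ω)| * (Real.cos (Real.pi / M) / Real.sin (Real.pi / M)) ≤ x}).toReal =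
      M / Real.pi * Real.arcsin (x * Real.sin (Real.pi / M)) := by
  obtain ⟨hx0, hx1⟩ := hx
  set α := Real.pi / M with hα
  have hM0 : (0:ℝ) < M := by
    have : (2:ℝ) ≤ M := by exact_mod_cast hM
    linarith
  have hpi := Real.pi_pos
  have hαpos : 0 < α := by positivity
  have hαle : α ≤ Real.pi / 2 := by
    rw [hα]
    apply div_le_div_of_nonneg_left hpi.le (by norm_num)
    exact_mod_cast hM
  have hsinα : 0 < Real.sin α := Real.sin_pos_of_pos_of_lt_pi hαpos (by linarith)
  have hsinα1 : Real.sin α ≤ 1 := Real.sin_le_one α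
  set s := Real.arcsin (x * Real.sin α) with hs
  have hxs0 : 0 ≤ x * Real.sin α := by positivity
  have hxs1 : x * Real.sin α ≤ 1 := by nlinarith
  have hs0 : 0 ≤ s := Real.arcsin_nonneg.2 hxs0
  have hsle2 : s ≤ Real.pi / 2 := Real.arcsin_le_pi_div_two _
  have hsins : Real.sin s = x * Real.sin α := Real.sin_arcsin (by linarith) hxs1
  have hsle : s ≤ α := by
    rw [hs, Real.arcsin_le_iff_le_sin ⟨by linarith, hxs1⟩ ⟨by linarith, hαle⟩]
    nlinarith
  -- key pointwise equivalence
  have hkey : ∀ t ∈ Icc (-α) α,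
      (Real.cos t - |Real.sin t| * (Real.cos α / Real.sin α) ≤ x ↔ α - s ≤ |t|) := by
    intro t ht
    obtain ⟨ht1, ht2⟩ := ht
    have habs : |t| ∈ Icc 0 α := ⟨abs_nonneg t, abs_le.2 ⟨ht1, ht2⟩⟩
    have hsinabs : Real.sin |t| = |Real.sin t| := by
      rcases le_or_gt 0 t with h | h
      · rw [abs_of_nonneg h, abs_of_nonneg]
        exact Real.sin_nonneg_of_nonneg_of_le_pi h (by linarith [habs.2, abs_of_nonneg h])
      · rw [abs_of_neg h, Real.sin_neg, abs_of_nonpos]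
        exact Real.sin_nonpos_of_nonpos_of_neg_pi_le h.le (by linarith)
    have hcosabs : Real.cos |t| = Real.cos t := by
      rcases le_or_gt 0 t with h | h
      · rw [abs_of_nonneg h]
      · rw [abs_of_neg h, Real.cos_neg]
    have hdiv : Real.cos α / Real.sin α * Real.sin α = Real.cos α :=
      div_mul_cancel₀ _ hsinα.ne'
    have step1 : Real.cos t - |Real.sin t| * (Real.cos α / Real.sin α) ≤ x ↔
        Real.sin (α - |t|) ≤ Real.sin s := by
      rw [Real.sin_sub, hsinabs, hcosabs, hsins]
      have hexp : (Real.cos t - |Real.sin t| * (Real.cos α / Real.sin α)) * Real.sin α =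
          Real.sin α * Real.cos t - Real.cos α * |Real.sin t| := by
        field_simp
      constructor
      · intro h
        have := mul_le_mul_of_nonneg_right h hsinα.le
        linarith [hexp ▸ this]
      · intro h
        have h2 : (Real.cos t - |Real.sin t| * (Real.cos α / Real.sin α)) * Real.sin α ≤
            x * Real.sin α := by rw [hexp]; exact h
        exact le_of_mul_le_mul_right h2 hsinα
    rw [step1]
    rw [Real.strictMonoOn_sin.le_iff_le ⟨by linarith [habs.1, habs.2], by linarith [habs.1]⟩
      ⟨by linarith, hsle2⟩]
    constructor <;> intro h <;> linarith
  -- the set in ℝ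
  set c : ℝ := Real.cos α / Real.sin α with hc
  set S : Set ℝ := {t | Real.cos t - |Real.sin t| * c ≤ x} with hS
  have hSmeas : MeasurableSet S := by
    have : IsClosed S := isClosed_le (by continuity) continuous_const
    exact this.measurableSet
  have hmap : ℙ {ω | Real.cos (θ ω) - |Real.sin (θ ω)| * c ≤ x} = (Measure.map θ ℙ) S := by
    rw [Measure.map_apply hmθ hSmeas]
    rfl
  have hsetEq : S ∩ Icc (-α) α = Icc (-α) (-(α - s)) ∪ Icc (α - s) α := by
    ext t
    simp only [hS, mem_inter_iff, mem_setOf_eq, mem_Icc, mem_union]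
    constructor
    · rintro ⟨h1, h2⟩
      have := (hkey t h2).1 h1
      rcases le_abs.1 this with h | h
      · right; exact ⟨h, h2.2⟩
      · left; exact ⟨h2.1, by linarith⟩
    · rintro (⟨h1, h2⟩ | ⟨h1, h2⟩)
      · have hmem : t ∈ Icc (-α) α := ⟨h1, by linarith⟩
        refine ⟨(hkey t hmem).2 ?_, hmem⟩
        exact le_abs.2 (Or.inr (by linarith))
      · have hmem : t ∈ Icc (-α) α := ⟨by linarith, h2⟩
        refine ⟨(hkey t hmem).2 ?_, hmem⟩
        exact le_abs.2 (Or.inl h1)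
  have hnull : volume (Icc (-α) (-(α - s)) ∩ Icc (α - s) α) = 0 := by
    apply measure_mono_null (t := Icc (α - s) (-(α - s)))
      (fun t ht => ⟨ht.2.1, ht.1.2⟩)
    rw [Real.volume_Icc, ENNReal.ofReal_eq_zero]
    linarith
  have hvol : volume (S ∩ Icc (-α) α) = ENNReal.ofReal (2 * s) := by
    rw [hsetEq, measure_union₀ measurableSet_Icc.nullMeasurableSet hnull,
      Real.volume_Icc, Real.volume_Icc,
      ← ENNReal.ofReal_add (by linarith) (by linarith)]
    congr 1
    ring
  rw [hmap, hθ, Measure.smul_apply, Measure.restrict_apply hSmeas, hvol, smul_eq_mul,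
    ENNReal.toReal_mul, ENNReal.toReal_inv, ENNReal.toReal_ofReal (by linarith),
    ENNReal.toReal_ofReal (by linarith)]
  rw [hα]
  field_simp
end

section
/- Let M ≥ 2 be an integer and θ uniform on [−π/M, π/M], with v = cos θ − |sin θ|·cot(π/M). Then v has density p_v(x) = (M·sin(π/M))/(π·√(1 − sin²(π/M)·x²)) for x ∈ [0,1] and p_v(x) = 0 otherwise. -/
/-!
On `[-α, α]` with `α = π / M` one has `v(θ) = sin (α - |θ|) / sin α`, so for `0 ≤ x ≤ 1` the event
`v ≤ x` is `[-α, α]` minus the centred open interval of half-length `α - arcsin (x sin α)`, and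
`P(v ≤ x) = arcsin (x sin α) / α`. This is also the integral of the proposed density over
`[0, x]`, since `arcsin (x sin α) / α` is an antiderivative of it; as both laws are carried by
`[0, 1]`, they have the same distribution function.
-/

open MeasureTheory ProbabilityTheory Real Set

theorem MeasureTheory.Measure.ext_of_Iic_of_compl_Icc {X : Type*} [TopologicalSpace X]
    [MeasurableSpace X] [SecondCountableTopology X] [LinearOrder X] [OrderTopology X]
    [BorelSpace X] {μ ν : Measure X} [IsFiniteMeasure μ] {a b : X} (hab : a ≤ b)
    (hμ : μ (Icc a b)ᶜ = 0) (hν : ν (Icc a b)ᶜ = 0)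
    (h : ∀ x ∈ Icc a b, μ (Iic x) = ν (Iic x)) : μ = ν := by
  refine ext_of_Iic μ ν fun x => ?_
  rw [← measure_inter_conull hμ, ← measure_inter_conull hν]
  rcases lt_or_ge x a with hxa | hax
  · have hempty : Iic x ∩ Icc a b = ∅ :=
      eq_empty_of_forall_notMem fun t ht => (ht.1.trans_lt hxa).not_ge ht.2.1
    rw [hempty, measure_empty, measure_empty]
  · have hclip : Iic x ∩ Icc a b = Iic (min x b) ∩ Icc a b := by
      ext t
      simp only [mem_inter_iff, mem_Iic, mem_Icc, le_min_iff]
      tauto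
    rw [hclip, measure_inter_conull hμ, measure_inter_conull hν]
    exact h _ ⟨le_min hax hab, min_le_right x b⟩

theorem hasDerivAt_arcsin_mul_div {s c t : ℝ} (h₁ : s * t ≠ -1) (h₂ : s * t ≠ 1) :
    HasDerivAt (fun t => arcsin (s * t) / c) (s / (c * √(1 - s ^ 2 * t ^ 2))) t := by
  refine (((hasDerivAt_arcsin h₁ h₂).comp t ((hasDerivAt_id' t).const_mul s)).div_const c
    ).congr_deriv ?_
  rw [mul_one, mul_pow]
  ring

theorem lintegral_Icc_ofReal_deriv_of_nonneg {g g' : ℝ → ℝ} {a b : ℝ} (hab : a ≤ b)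
    (hcont : ContinuousOn g (Icc a b)) (hderiv : ∀ x ∈ Ioo a b, HasDerivAt g (g' x) x)
    (hpos : ∀ x ∈ Ioo a b, 0 ≤ g' x) :
    ∫⁻ x in Icc a b, ENNReal.ofReal (g' x) = ENNReal.ofReal (g b - g a) := by
  have hint : IntegrableOn g' (Ioo a b) :=
    (intervalIntegral.integrableOn_deriv_of_nonneg hcont hderiv hpos).mono_set
      Ioo_subset_Ioc_self
  rw [Measure.restrict_congr_set Ioo_ae_eq_Icc.symm,
    ← ofReal_integral_eq_lintegral_ofReal hint
      ((ae_restrict_iff' measurableSet_Ioo).2 (.of_forall hpos)),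
    ← integral_Ioc_eq_integral_Ioo, ← intervalIntegral.integral_of_le hab,
    intervalIntegral.integral_eq_sub_of_hasDerivAt_of_le hab hcont hderiv
      ((intervalIntegrable_iff_integrableOn_Ioo_of_le hab).2 hint)]

theorem lintegral_Icc_ofReal_div_sqrt_one_sub_sq {s c x : ℝ} (hs : 0 < s) (hc : 0 ≤ c)
    (hx : 0 ≤ x) (hsx : s * x ≤ 1) :
    ∫⁻ t in Icc 0 x, ENNReal.ofReal (s / (c * √(1 - s ^ 2 * t ^ 2))) =
      ENNReal.ofReal (arcsin (s * x) / c) := by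
  have hst : ∀ t ∈ Ioo 0 x, 0 < s * t ∧ s * t < 1 := fun t ht =>
    ⟨mul_pos hs ht.1, (mul_lt_mul_of_pos_left ht.2 hs).trans_le hsx⟩
  rw [lintegral_Icc_ofReal_deriv_of_nonneg hx (by fun_prop)
    (fun t ht => hasDerivAt_arcsin_mul_div (by linarith [hst t ht]) (hst t ht).2.ne)
    (fun t _ => by positivity)]
  simp

theorem withDensity_ofReal_ite_Icc_div_sqrt_apply_Iic {s c x : ℝ} (hs : 0 < s) (hs1 : s ≤ 1)
    (hc : 0 ≤ c) (hx : x ∈ Icc (0 : ℝ) 1) :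
    volume.withDensity (fun t => ENNReal.ofReal
      (if t ∈ Icc (0 : ℝ) 1 then s / (c * √(1 - s ^ 2 * t ^ 2)) else 0)) (Iic x) =
      ENNReal.ofReal (arcsin (s * x) / c) := by
  have hind : (fun t => ENNReal.ofReal
      (if t ∈ Icc (0 : ℝ) 1 then s / (c * √(1 - s ^ 2 * t ^ 2)) else 0)) =
      (Icc 0 1).indicator (fun t => ENNReal.ofReal (s / (c * √(1 - s ^ 2 * t ^ 2)))) := by
    ext t
    split_ifs with ht <;> simp [ht]
  have hIcc : Iic x ∩ Icc 0 1 = Icc 0 x := by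
    ext t
    simp only [mem_inter_iff, mem_Iic, mem_Icc]
    grind
  rw [hind, withDensity_indicator measurableSet_Icc, withDensity_apply _ measurableSet_Iic,
    Measure.restrict_restrict measurableSet_Iic, hIcc]
  exact lintegral_Icc_ofReal_div_sqrt_one_sub_sq hs hc hx.1 (by nlinarith [hx.2])

theorem withDensity_ofReal_ite_Icc_apply_compl {f : ℝ → ℝ} {a b : ℝ} :
    volume.withDensity (fun t => ENNReal.ofReal (if t ∈ Icc a b then f t else 0)) (Icc a b)ᶜ
      = 0 := by
  rw [withDensity_apply _ measurableSet_Icc.compl]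
  exact setLIntegral_eq_zero measurableSet_Icc.compl fun t ht => by rw [if_neg ht, ENNReal.ofReal_zero, Pi.zero_apply]

theorem cos_sub_abs_sin_mul_cot_eq {α t : ℝ} (hα : sin α ≠ 0) (ht : |t| ≤ π) :
    cos t - |sin t| * (cos α / sin α) = sin (α - |t|) / sin α := by
  rw [abs_sin_eq_sin_abs_of_abs_le_pi ht, ← cos_abs t, sin_sub]
  field_simp

theorem cos_sub_abs_sin_mul_cot_mem_Icc {α : ℝ} (hα₀ : 0 < α) (hα : α ≤ π / 2) {t : ℝ} (ht : |t| ≤ α) :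
    cos t - |sin t| * (cos α / sin α) ∈ Icc (0 : ℝ) 1 := by
  have hs : 0 < sin α := sin_pos_of_pos_of_lt_pi hα₀ (by linarith [pi_pos])
  rw [cos_sub_abs_sin_mul_cot_eq hs.ne' (by linarith [pi_pos]), mem_Icc, div_le_one hs]
  have h₀ := abs_nonneg t
  exact ⟨div_nonneg (sin_nonneg_of_nonneg_of_le_pi (by linarith) (by linarith)) hs.le,
    sin_le_sin_of_le_of_le_pi_div_two (by linarith) hα (by linarith)⟩

theorem cos_sub_abs_sin_mul_cot_le_iff {α : ℝ} (hα₀ : 0 < α) (hα : α ≤ π / 2) {t x : ℝ} (ht : |t| ≤ α)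
    (hx : sin α * x ∈ Icc (-1 : ℝ) 1) :
    cos t - |sin t| * (cos α / sin α) ≤ x ↔ α - arcsin (sin α * x) ≤ |t| := by
  have hs : 0 < sin α := sin_pos_of_pos_of_lt_pi hα₀ (by linarith [pi_pos])
  have h₀ := abs_nonneg t
  rw [cos_sub_abs_sin_mul_cot_eq hs.ne' (by linarith [pi_pos]), div_le_iff₀ hs, mul_comm x,
    ← le_arcsin_iff_sin_le ⟨by linarith, by linarith⟩ hx, sub_le_comm]

theorem preimage_Iic_inter_Icc_neg {α : ℝ} (hα₀ : 0 < α) (hα : α ≤ π / 2) {x : ℝ}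
    (hx : sin α * x ∈ Icc (-1 : ℝ) 1) :
    (fun t => cos t - |sin t| * (cos α / sin α)) ⁻¹' Iic x ∩ Icc (-α) α =
      Icc (-α) α \ Ioo (-(α - arcsin (sin α * x))) (α - arcsin (sin α * x)) := by
  ext t
  rw [mem_inter_iff, mem_sdiff, mem_Icc, ← abs_le, mem_Ioo, ← abs_lt, not_lt, mem_preimage,
    mem_Iic]
  exact ⟨fun ⟨h, ht⟩ => ⟨ht, (cos_sub_abs_sin_mul_cot_le_iff hα₀ hα ht hx).1 h⟩,
    fun ⟨ht, h⟩ => ⟨(cos_sub_abs_sin_mul_cot_le_iff hα₀ hα ht hx).2 h, ht⟩⟩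

theorem volume_Icc_neg_diff_Ioo_neg {a b : ℝ} (ha : 0 ≤ a) (hab : a ≤ b) :
    volume (Icc (-b) b \ Ioo (-a) a) = ENNReal.ofReal (2 * (b - a)) := by
  rw [measure_sdiff (Ioo_subset_Icc_self.trans (Icc_subset_Icc (neg_le_neg hab) hab))
    measurableSet_Ioo.nullMeasurableSet measure_Ioo_lt_top.ne, volume_Icc, volume_Ioo,
    ← ENNReal.ofReal_sub _ (by linarith)]
  ring_nf

theorem map_smul_restrict_Icc_neg_apply_compl_Icc {α : ℝ} (hα₀ : 0 < α) (hα : α ≤ π / 2)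
    (c : ENNReal) :
    Measure.map (fun t => cos t - |sin t| * (cos α / sin α))
      (c • volume.restrict (Icc (-α) α)) (Icc 0 1)ᶜ = 0 := by
  have hempty : (fun t => cos t - |sin t| * (cos α / sin α)) ⁻¹' (Icc 0 1)ᶜ ∩ Icc (-α) α = ∅ :=
    eq_empty_of_forall_notMem fun t ⟨h, ht⟩ =>
      h (cos_sub_abs_sin_mul_cot_mem_Icc hα₀ hα (abs_le.2 ht))
  rw [Measure.map_apply (by fun_prop) measurableSet_Icc.compl, Measure.smul_apply,
    Measure.restrict_apply (measurableSet_Icc.compl.preimage (by fun_prop)), hempty,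
    measure_empty, smul_zero]

theorem map_smul_restrict_Icc_neg_apply_Iic {α x : ℝ} (hα₀ : 0 < α) (hα : α ≤ π / 2)
    (hx : x ∈ Icc (0 : ℝ) 1) :
    Measure.map (fun t => cos t - |sin t| * (cos α / sin α))
      ((ENNReal.ofReal (2 * α))⁻¹ • volume.restrict (Icc (-α) α)) (Iic x) =
      ENNReal.ofReal (arcsin (sin α * x) / α) := by
  have hs : 0 < sin α := sin_pos_of_pos_of_lt_pi hα₀ (by linarith [pi_pos])
  have hsx : sin α * x ∈ Icc (0 : ℝ) (sin α) :=
    ⟨mul_nonneg hs.le hx.1, mul_le_of_le_one_right hs.le hx.2⟩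
  have hA₀ : 0 ≤ arcsin (sin α * x) := arcsin_nonneg.2 hsx.1
  have hAα : arcsin (sin α * x) ≤ α :=
    (arcsin_le_arcsin hsx.2).trans (arcsin_sin (by linarith) hα).le
  rw [Measure.map_apply (by fun_prop) measurableSet_Iic, Measure.smul_apply,
    Measure.restrict_apply (measurableSet_Iic.preimage (by fun_prop)),
    preimage_Iic_inter_Icc_neg hα₀ hα ⟨by linarith [hsx.1], hsx.2.trans (sin_le_one α)⟩,
    volume_Icc_neg_diff_Ioo_neg (sub_nonneg.2 hAα) (sub_le_self _ hA₀), sub_sub_cancel,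
    smul_eq_mul, ← ENNReal.ofReal_inv_of_pos (by positivity),
    ← ENNReal.ofReal_mul (by positivity)]
  congr 1
  field_simp

theorem v_pdf {Ω : Type*} [MeasureSpace Ω]
    [IsProbabilityMeasure (ℙ : Measure Ω)]
    (M : ℕ) (hM : 2 ≤ M) (θ : Ω → ℝ) (hmθ : Measurable θ)
    (hθ : Measure.map θ ℙ =
      (ENNReal.ofReal (2 * (Real.pi / M)))⁻¹ •
        (volume.restrict (Set.Icc (-(Real.pi / M)) (Real.pi / M)))) :
    Measure.map (fun ω => Real.cos (θ ω) -
        |Real.sin (θ ω)| * (Real.cos (Real.pi / M) / Real.sin (Real.pi / M))) ℙ =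
      volume.withDensity (fun x => ENNReal.ofReal
        (if x ∈ Set.Icc (0 : ℝ) 1 then
          M * Real.sin (Real.pi / M) / (Real.pi * Real.sqrt (1 - Real.sin (Real.pi / M) ^ 2 * x ^ 2))
        else 0)) := by
  set α := π / M with hα_def
  have hα₀ : 0 < α := div_pos pi_pos (by exact_mod_cast (by omega : 0 < M))
  have hα : α ≤ π / 2 := div_le_div_of_nonneg_left pi_pos.le two_pos (by exact_mod_cast hM)
  have hs : 0 < sin α := sin_pos_of_pos_of_lt_pi hα₀ (by linarith [pi_pos])
  have hdensity : ∀ x : ℝ, M * sin α / (π * √(1 - sin α ^ 2 * x ^ 2)) =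
      sin α / (α * √(1 - sin α ^ 2 * x ^ 2)) := fun x => by
    rw [hα_def]
    field_simp
  have hlaw : Measure.map (fun ω => cos (θ ω) - |sin (θ ω)| * (cos α / sin α)) ℙ =
      Measure.map (fun t => cos t - |sin t| * (cos α / sin α))
        ((ENNReal.ofReal (2 * α))⁻¹ • volume.restrict (Icc (-α) α)) := by
    rw [← hθ, Measure.map_map (by fun_prop) hmθ]
    rfl
  simp_rw [hdensity]
  refine Measure.ext_of_Iic_of_compl_Icc zero_le_one ?_
    withDensity_ofReal_ite_Icc_apply_compl fun x hx => ?_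
  · rw [hlaw]
    exact map_smul_restrict_Icc_neg_apply_compl_Icc hα₀ hα _
  · rw [hlaw, map_smul_restrict_Icc_neg_apply_Iic hα₀ hα hx,
      withDensity_ofReal_ite_Icc_div_sqrt_apply_Iic hs (sin_le_one α) hα₀.le hx]
end

section
/- If r and v are independent nonnegative real random variables, r has density p_r(x) = 2x·e^{−x²} for x ≥ 0 (Rayleigh), and v has density p_v(z) = (M·sin(π/M))/(π·√(1 − sin²(π/M)z²)) on [0,1], then the product α₁ = r·v has density p_{α₁}(x) = (2M·sin(π/M)/√π)·e^{−sin²(π/M)·x²}·Q(√2·cos(π/M)·x) for x ≥ 0, and 0 for x < 0. -/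
/-!
By independence, the law of `r * v` is the image of the product of the two laws under
multiplication; substituting `u = x * y` in the inner integral gives it the density
`u ↦ ∫ p_r(x) |x|⁻¹ p_v(u / x) dx`. For `u > 0`, with `a = sin(π/M)` and `c = M a`, only `x ≥ u`
contributes, where the integrand equals `(2c/π) e^{-x²} x / √(x² - a²u²)`. The substitution
`t = √(x² - a²u²)` turns this into `(2c/π) e^{-a²u²} ∫_{t > u cos(π/M)} e^{-t²} dt`, a Gaussian tail.
-/

open MeasureTheory ProbabilityTheory Real Set

open scoped ENNReal

/-- At `x = 0` the integrand is `0` since `|0|⁻¹ = 0`; harmless, as `{0}` is Lebesgue-null. -/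
noncomputable def productDensity (f g : ℝ → ℝ≥0∞) (u : ℝ) : ℝ≥0∞ :=
  ∫⁻ x, f x * (ENNReal.ofReal |x|⁻¹ * g (u / x))

lemma lintegral_comp_const_mul {c : ℝ} (hc : c ≠ 0) (h : ℝ → ℝ≥0∞) :
    ∫⁻ y, h (c * y) = ENNReal.ofReal |c|⁻¹ * ∫⁻ u, h u := by
  rw [← abs_inv, ← smul_eq_mul, ← lintegral_smul_measure, ← Real.map_volume_mul_left hc]
  exact (lintegral_map_equiv h (Homeomorph.mulLeft₀ c hc).toMeasurableEquiv).symm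

lemma withDensity_preimage_const_mul {c : ℝ} (hc : c ≠ 0) {g : ℝ → ℝ≥0∞} {s : Set ℝ}
    (hs : MeasurableSet s) :
    volume.withDensity g ((c * ·) ⁻¹' s) = ENNReal.ofReal |c|⁻¹ * ∫⁻ u in s, g (u / c) := by
  rw [withDensity_apply _ (hs.preimage (measurable_const_mul c)), ← lintegral_indicator
    (hs.preimage (measurable_const_mul c)), ← lintegral_indicator hs, ← lintegral_comp_const_mul hc]
  congr 1 with y
  simp only [indicator, mul_div_cancel_left₀ _ hc]
  rfl

theorem map_mul_prod_withDensity {f g : ℝ → ℝ≥0∞} (hf : Measurable f) (hg : Measurable g) :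
    ((volume.withDensity f).prod (volume.withDensity g)).map (fun p => p.1 * p.2) =
      volume.withDensity (productDensity f g) := by
  ext s hs
  have hmul : Measurable (fun p : ℝ × ℝ => p.1 * p.2) := by fun_prop
  rw [Measure.map_apply hmul hs, Measure.prod_apply (hs.preimage hmul),
    lintegral_withDensity_eq_lintegral_mul _ hf (measurable_measure_prodMk_left (hs.preimage hmul)),
    withDensity_apply _ hs]
  unfold productDensity
  rw [lintegral_lintegral_swap (by fun_prop)]
  refine lintegral_congr_ae ?_
  filter_upwards [compl_mem_ae_iff.mpr (Real.volume_singleton (a := 0))] with x hx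
  rw [Pi.mul_apply, lintegral_const_mul _ (by fun_prop), lintegral_const_mul _ (by fun_prop)]
  exact congrArg (f x * ·) (withDensity_preimage_const_mul hx hs)

theorem ProbabilityTheory.IndepFun.map_mul_eq_withDensity_productDensity {Ω : Type*}
    [MeasurableSpace Ω] {μ : Measure Ω} [IsFiniteMeasure μ] {X Y : Ω → ℝ} {f g : ℝ → ℝ≥0∞}
    (hXY : IndepFun X Y μ) (hX : AEMeasurable X μ) (hY : AEMeasurable Y μ) (hf : Measurable f)
    (hg : Measurable g) (hXf : μ.map X = volume.withDensity f)
    (hYg : μ.map Y = volume.withDensity g) :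
    μ.map (fun ω => X ω * Y ω) = volume.withDensity (productDensity f g) := by
  rw [← map_mul_prod_withDensity hf hg, ← hXf, ← hYg,
    ← (indepFun_iff_map_prod_eq_prod_map_map hX hY).mp hXY,
    AEMeasurable.map_map_of_aemeasurable (by fun_prop) (hX.prodMk hY)]
  rfl

lemma integral_Ioi_exp_neg_sq (A : ℝ) :
    ∫ t in Ioi A, exp (-t ^ 2) = √π * gaussQ (√2 * A) := by
  have hscale : ∀ t : ℝ, exp (-(√2 * t) ^ 2 / 2) = exp (-t ^ 2) := fun t => by
    rw [mul_pow, sq_sqrt zero_le_two]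
    ring_nf
  have := integral_comp_mul_left_Ioi (fun t => exp (-t ^ 2 / 2)) A (by positivity : (0 : ℝ) < √2)
  simp only [hscale] at this
  rw [this, gaussQ, sqrt_mul zero_le_two, smul_eq_mul]
  field_simp

lemma lintegral_Ioi_exp_neg_sq (A : ℝ) :
    ∫⁻ t in Ioi A, ENNReal.ofReal (exp (-t ^ 2)) = ENNReal.ofReal (√π * gaussQ (√2 * A)) := by
  have hint : Integrable fun t : ℝ => exp (-t ^ 2) := by
    simpa using integrable_exp_neg_mul_sq one_pos
  rw [← integral_Ioi_exp_neg_sq, ofReal_integral_eq_lintegral_ofReal hint.integrableOn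
    (Filter.Eventually.of_forall fun t => (exp_pos _).le)]

lemma lintegral_Ioi_exp_neg_sq_mul_div_sqrt {u k : ℝ} (hu : 0 ≤ u) (hk : k ≤ u ^ 2) :
    ∫⁻ x in Ioi u, ENNReal.ofReal (exp (-x ^ 2) * (x / √(x ^ 2 - k))) =
      ENNReal.ofReal (exp (-k) * (√π * gaussQ (√2 * √(u ^ 2 - k)))) := by
  set ψ : ℝ → ℝ := fun x => √(x ^ 2 - k)
  have hpos : ∀ x ∈ Ioi u, 0 < x ^ 2 - k := fun x hx => by nlinarith [mem_Ioi.mp hx]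
  have hderiv : ∀ x ∈ Ioi u, HasDerivWithinAt ψ (x / √(x ^ 2 - k)) (Ioi u) x := by
    intro x hx
    refine (((hasDerivAt_pow 2 x).sub_const k).sqrt (hpos x hx).ne').congr_deriv ?_
      |>.hasDerivWithinAt
    have := sqrt_pos.mpr (hpos x hx)
    field_simp
    norm_num
  have hinj : InjOn ψ (Ioi u) := by
    intro x hx y hy hxy
    have hsq := congrArg (· ^ 2) hxy
    simp only [ψ, sq_sqrt (hpos x hx).le, sq_sqrt (hpos y hy).le, sub_left_inj] at hsq
    exact (pow_left_inj₀ (hu.trans (le_of_lt hx)) (hu.trans (le_of_lt hy)) two_ne_zero).mp hsq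
  have himage : ψ '' Ioi u = Ioi √(u ^ 2 - k) := by
    ext t
    constructor
    · rintro ⟨x, hx, rfl⟩
      exact sqrt_lt_sqrt (by linarith) (by nlinarith [mem_Ioi.mp hx])
    · intro ht
      have ht0 : 0 < t := (sqrt_nonneg _).trans_lt ht
      have ht2 : u ^ 2 - k < t ^ 2 := (sqrt_lt' ht0).mp ht
      have htk : 0 ≤ t ^ 2 + k := by nlinarith
      refine ⟨√(t ^ 2 + k), (lt_sqrt hu).mpr (by linarith), ?_⟩
      show √(√(t ^ 2 + k) ^ 2 - k) = t
      rw [sq_sqrt htk, add_sub_cancel_right, sqrt_sq ht0.le]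
  have hintegrand : ∀ x ∈ Ioi u, ENNReal.ofReal (exp (-x ^ 2) * (x / √(x ^ 2 - k))) =
      ENNReal.ofReal |x / √(x ^ 2 - k)| *
        (ENNReal.ofReal (exp (-k)) * ENNReal.ofReal (exp (-ψ x ^ 2))) := by
    intro x hx
    have hx0 : 0 ≤ x := hu.trans (le_of_lt hx)
    rw [abs_of_nonneg (by positivity), ← ENNReal.ofReal_mul (exp_pos _).le,
      ← ENNReal.ofReal_mul (by positivity), ← exp_add, sq_sqrt (hpos x hx).le, mul_comm]
    ring_nf
  calc ∫⁻ x in Ioi u, ENNReal.ofReal (exp (-x ^ 2) * (x / √(x ^ 2 - k)))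
      = ∫⁻ t in ψ '' Ioi u, ENNReal.ofReal (exp (-k)) * ENNReal.ofReal (exp (-t ^ 2)) := by
        rw [lintegral_image_eq_lintegral_abs_deriv_mul measurableSet_Ioi hderiv hinj]
        exact setLIntegral_congr_fun measurableSet_Ioi hintegrand
    _ = ENNReal.ofReal (exp (-k) * (√π * gaussQ (√2 * √(u ^ 2 - k)))) := by
        rw [himage, lintegral_const_mul _ (by fun_prop), lintegral_Ioi_exp_neg_sq,
          ← ENNReal.ofReal_mul (exp_pos _).le]

noncomputable def rayleighDensity (x : ℝ) : ℝ≥0∞ :=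
  ENNReal.ofReal (if 0 ≤ x then 2 * x * exp (-x ^ 2) else 0)

/-- The density of `v` in the theorem is `arcsineDensity (sin (π / M)) (M * sin (π / M))`. -/
noncomputable def arcsineDensity (a c z : ℝ) : ℝ≥0∞ :=
  ENNReal.ofReal (if z ∈ Icc (0 : ℝ) 1 then c / (π * √(1 - a ^ 2 * z ^ 2)) else 0)

lemma measurable_rayleighDensity : Measurable rayleighDensity :=
  (Measurable.ite measurableSet_Ici (by fun_prop) measurable_const).ennreal_ofReal

lemma measurable_arcsineDensity (a c : ℝ) : Measurable (arcsineDensity a c) :=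
  (Measurable.ite measurableSet_Icc (by fun_prop) measurable_const).ennreal_ofReal

lemma rayleighDensity_of_nonpos {x : ℝ} (hx : x ≤ 0) : rayleighDensity x = 0 := by
  rw [rayleighDensity, ENNReal.ofReal_eq_zero]
  split_ifs with h
  · rw [le_antisymm hx h]
    simp
  · rfl

lemma arcsineDensity_of_notMem {a c z : ℝ} (hz : z ∉ Icc (0 : ℝ) 1) :
    arcsineDensity a c z = 0 := by
  rw [arcsineDensity, if_neg hz, ENNReal.ofReal_zero]

lemma rayleighDensity_mul_arcsineDensity_div {a c u : ℝ} (hc : 0 ≤ c) (hu : 0 < u) (x : ℝ) :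
    rayleighDensity x * (ENNReal.ofReal |x|⁻¹ * arcsineDensity a c (u / x)) =
      (Ici u).indicator (fun x => ENNReal.ofReal (2 * c / π) *
        ENNReal.ofReal (exp (-x ^ 2) * (x / √(x ^ 2 - a ^ 2 * u ^ 2)))) x := by
  rcases lt_or_ge x u with hxu | hux
  · rw [indicator_of_notMem (notMem_Ici.mpr hxu)]
    rcases le_or_gt x 0 with hx0 | hx0
    · rw [rayleighDensity_of_nonpos hx0, zero_mul]
    · rw [arcsineDensity_of_notMem fun h => (one_lt_div hx0).mpr hxu |>.not_ge h.2, mul_zero,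
        mul_zero]
  · have hx0 : 0 < x := hu.trans_le hux
    have hsqrt : √(1 - a ^ 2 * (u / x) ^ 2) = √(x ^ 2 - a ^ 2 * u ^ 2) / x := by
      rw [show 1 - a ^ 2 * (u / x) ^ 2 = (x ^ 2 - a ^ 2 * u ^ 2) / x ^ 2 by field_simp,
        sqrt_div' _ (sq_nonneg x), sqrt_sq hx0.le]
    rw [indicator_of_mem (mem_Ici.mpr hux), rayleighDensity, arcsineDensity, if_pos hx0.le,
      if_pos ⟨(div_pos hu hx0).le, (div_le_one hx0).mpr hux⟩, hsqrt, abs_of_pos hx0,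
      ← ENNReal.ofReal_mul (by positivity), ← ENNReal.ofReal_mul (by positivity),
      ← ENNReal.ofReal_mul (by positivity)]
    congr 1
    field_simp

lemma productDensity_rayleighDensity_arcsineDensity_of_pos {a b c u : ℝ} (hc : 0 ≤ c)
    (hb : 0 ≤ b) (hab : a ^ 2 + b ^ 2 = 1) (hu : 0 < u) :
    productDensity rayleighDensity (arcsineDensity a c) u =
      ENNReal.ofReal (2 * c / √π * exp (-(a ^ 2) * u ^ 2) * gaussQ (√2 * b * u)) := by
  have hk : a ^ 2 * u ^ 2 ≤ u ^ 2 := by nlinarith [sq_nonneg b, sq_nonneg u]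
  have hbu : √(u ^ 2 - a ^ 2 * u ^ 2) = b * u := by
    rw [show u ^ 2 - a ^ 2 * u ^ 2 = (b * u) ^ 2 by linear_combination -u ^ 2 * hab,
      sqrt_sq (mul_nonneg hb hu.le)]
  simp_rw [productDensity, rayleighDensity_mul_arcsineDensity_div hc hu]
  rw [lintegral_indicator measurableSet_Ici, setLIntegral_congr Ioi_ae_eq_Ici.symm,
    lintegral_const_mul _ (by fun_prop), lintegral_Ioi_exp_neg_sq_mul_div_sqrt hu.le hk, hbu,
    ← ENNReal.ofReal_mul (by positivity)]
  congr 1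
  field_simp
  rw [sq_sqrt pi_pos.le]

lemma productDensity_rayleighDensity_arcsineDensity_of_neg {a c u : ℝ} (hu : u < 0) :
    productDensity rayleighDensity (arcsineDensity a c) u = 0 := by
  refine (lintegral_congr fun x => ?_).trans lintegral_zero
  rcases le_or_gt x 0 with hx | hx
  · rw [rayleighDensity_of_nonpos hx, zero_mul]
  · rw [arcsineDensity_of_notMem fun h => (div_neg_of_neg_of_pos hu hx).not_ge h.1, mul_zero,
      mul_zero]

theorem product_density {Ω : Type*} [MeasureSpace Ω]
    [IsProbabilityMeasure (ℙ : Measure Ω)]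
    (M : ℕ) (hM : 2 ≤ M)
    (r v : Ω → ℝ) (hmr : Measurable r) (hmv : Measurable v)
    (hindep : IndepFun r v ℙ)
    (hr : Measure.map r ℙ = volume.withDensity (fun x =>
      ENNReal.ofReal (if 0 ≤ x then 2 * x * Real.exp (-x ^ 2) else 0)))
    (hv : Measure.map v ℙ = volume.withDensity (fun z =>
      ENNReal.ofReal (if z ∈ Set.Icc (0 : ℝ) 1 then
        M * Real.sin (Real.pi / M) /
          (Real.pi * Real.sqrt (1 - Real.sin (Real.pi / M) ^ 2 * z ^ 2))
      else 0))) :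
    Measure.map (fun ω => r ω * v ω) ℙ = volume.withDensity (fun x =>
      ENNReal.ofReal (if 0 ≤ x then
        2 * M * Real.sin (Real.pi / M) / Real.sqrt Real.pi *
          Real.exp (-(Real.sin (Real.pi / M) ^ 2) * x ^ 2) *
          gaussQ (Real.sqrt 2 * Real.cos (Real.pi / M) * x)
      else 0)) := by
  have hM' : (2 : ℝ) ≤ M := by exact_mod_cast hM
  have hθ : π / M ∈ Ioc 0 (π / 2) :=
    ⟨by positivity, div_le_div_of_nonneg_left pi_pos.le two_pos hM'⟩
  have hsin : 0 ≤ sin (π / M) :=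
    sin_nonneg_of_nonneg_of_le_pi hθ.1.le (hθ.2.trans (by linarith [pi_pos]))
  have hcos : 0 ≤ cos (π / M) := cos_nonneg_of_mem_Icc ⟨by linarith [hθ.1, pi_pos], hθ.2⟩
  rw [hindep.map_mul_eq_withDensity_productDensity hmr.aemeasurable hmv.aemeasurable
    measurable_rayleighDensity (measurable_arcsineDensity (sin (π / M)) (M * sin (π / M))) hr hv]
  refine withDensity_congr_ae ?_
  filter_upwards [compl_mem_ae_iff.mpr (volume_singleton (a := 0))] with u hu
  rcases lt_or_gt_of_ne hu with hneg | hpos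
  · rw [productDensity_rayleighDensity_arcsineDensity_of_neg hneg, if_neg hneg.not_ge,
      ENNReal.ofReal_zero]
  · rw [productDensity_rayleighDensity_arcsineDensity_of_pos (mul_nonneg M.cast_nonneg hsin) hcos
      (sin_sq_add_cos_sq _) hpos, if_pos hpos.le]
    ring_nf
end

section
/- For every integer M ≥ 2 and every x ≥ 0, e^{−sin²(π/M)·x²}·Q(√2·cos(π/M)·x) ≤ 1/2, where Q is the Gaussian tail function. -/
open Real Set

lemma gaussQ_nonneg (x : ℝ) : 0 ≤ gaussQ x := by
  apply mul_nonneg (by positivity)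
  exact MeasureTheory.setIntegral_nonneg measurableSet_Ioi fun t _ => (Real.exp_pos _).le

lemma gaussQ_zero : gaussQ 0 = 1 / 2 := by
  have h : (fun t : ℝ => Real.exp (-t ^ 2 / 2)) = fun t => Real.exp (-(1/2 : ℝ) * t ^ 2) := by
    funext t; ring_nf
  rw [gaussQ, h, integral_gaussian_Ioi]
  rw [show Real.pi / (1/2 : ℝ) = 2 * Real.pi by ring]
  rw [inv_mul_eq_div, div_div]
  rw [div_eq_div_iff (by positivity) two_ne_zero]
  ring

lemma gaussQ_le_half {x : ℝ} (hx : 0 ≤ x) : gaussQ x ≤ 1 / 2 := by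
  rw [← gaussQ_zero]
  apply mul_le_mul_of_nonneg_left _ (by positivity)
  apply MeasureTheory.setIntegral_mono_set
  · have : (fun t : ℝ => Real.exp (-t ^ 2 / 2)) = fun t => Real.exp (-(1/2 : ℝ) * t ^ 2) := by
      funext t; ring_nf
    rw [MeasureTheory.IntegrableOn, this]
    exact (integrable_exp_neg_mul_sq (by norm_num)).restrict
  · exact Filter.Eventually.of_forall fun t => (Real.exp_pos _).le
  · exact MeasureTheory.ae_of_all _ (Ioi_subset_Ioi hx)

theorem exp_mul_gaussQ_le_half (M : ℕ) (hM : 2 ≤ M) (x : ℝ) (hx : 0 ≤ x) :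
    Real.exp (-(Real.sin (Real.pi / M) ^ 2) * x ^ 2) *
      gaussQ (Real.sqrt 2 * Real.cos (Real.pi / M) * x) ≤ 1 / 2 := by
  have hM' : (2:ℝ) ≤ M := by exact_mod_cast hM
  have hcos : 0 ≤ Real.cos (Real.pi / M) := by
    apply Real.cos_nonneg_of_mem_Icc
    have h0 : 0 ≤ Real.pi / M := div_nonneg Real.pi_pos.le (by linarith)
    constructor
    · linarith [Real.pi_pos]
    · rw [div_le_div_iff₀ (by linarith) two_pos]
      nlinarith [Real.pi_pos]
  have harg : 0 ≤ Real.sqrt 2 * Real.cos (Real.pi / M) * x := by positivity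
  have h1 : Real.exp (-(Real.sin (Real.pi / M) ^ 2) * x ^ 2) ≤ 1 := by
    rw [Real.exp_le_one_iff]; nlinarith [sq_nonneg (Real.sin (Real.pi / M) * x)]
  calc Real.exp (-(Real.sin (Real.pi / M) ^ 2) * x ^ 2) *
      gaussQ (Real.sqrt 2 * Real.cos (Real.pi / M) * x)
      ≤ 1 * gaussQ (Real.sqrt 2 * Real.cos (Real.pi / M) * x) :=
        mul_le_mul_of_nonneg_right h1 (gaussQ_nonneg _)
    _ ≤ 1 / 2 := by rw [one_mul]; exact gaussQ_le_half harg
end
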